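/- arXiv:1909.03180 — 2 statements merged into one kernel-verified Lean document; each statement's English description precedes it below -/
import Mathlib

section
/- (Schwartz–Zippel with multiplicity) Let f ∈ F[x_1,...,x_n] be a nonzero polynomial of degree at most d over an arbitrary field F. Then for any finite subset U ⊆ F, the sum over a ∈ U^n of mult(f,a) is at most d·|U|^{n-1}. -/
open MvPolynomial

/-- The `i`-th Hasse derivative of a multivariate polynomial `P = Σ_m a_m x^m`. -/
noncomputable def hasseDeriv {F : Type*} [Field F] {σ : Type*} [Fintype σ] [DecidableEq σ]
    (i : σ →₀ ℕ) (P : MvPolynomial σ F) : MvPolynomial σ F :=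
  ∑ m ∈ P.support, (∏ k, Nat.choose (m k) (i k)) •
    MvPolynomial.monomial (m - i) (P.coeff m)

/-- `P` vanishes at `a` with multiplicity at least `N`: all Hasse derivatives of `P` of
weight strictly less than `N` vanish at `a`. -/
def HasMultAtLeast {F : Type*} [Field F] {σ : Type*} [Fintype σ] [DecidableEq σ]
    (P : MvPolynomial σ F) (a : σ → F) (N : ℕ) : Prop :=
  ∀ i : σ →₀ ℕ, (∑ k, i k) < N → MvPolynomial.eval a (hasseDeriv i P) = 0

/-- The multiplicity of a nonzero polynomial `P` at `a`: the largest `N` such that all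
Hasse derivatives of `P` of weight less than `N` vanish at `a`. -/
noncomputable def mult {F : Type*} [Field F] {σ : Type*} [Fintype σ] [DecidableEq σ]
    (P : MvPolynomial σ F) (a : σ → F) : ℕ :=
  sSup {N : ℕ | HasMultAtLeast P a N}

/-!
Induction on the number of variables. View `f` as a polynomial in `x₀` over `F[x₁, …, xₙ]`, of
degree `t` with leading coefficient `f_t`, so that `deg f_t + t ≤ deg f`. Fix the other coordinates
`a` and pick a Hasse derivative `∂ⁱ` of weight at most `mult(f_t, a)` with `∂ⁱ f_t (a) ≠ 0`. Then
`P(x₀) = (∂^(0,i) f)(x₀, a)` is a nonzero univariate polynomial of degree `t`. Applying `∂^(0,i)`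
lowers multiplicities by at most `|i|`, and restricting to the line `x₀ ↦ (x₀, a)` does not lower
them, so `mult(f, (b, a)) ≤ |i| + mult(P, b)`. As `P` has at most `t` roots counted with
multiplicity, `∑_{b ∈ U} mult(f, (b, a)) ≤ |U| · mult(f_t, a) + t`, and the induction hypothesis
for `f_t` closes the argument.
-/

section HasseDeriv

variable {F : Type*} [Field F] {σ : Type*} [Fintype σ] [DecidableEq σ]

theorem coeff_hasseDeriv (i u : σ →₀ ℕ) (P : MvPolynomial σ F) :
    coeff u (hasseDeriv i P) = (∏ k, ((u + i) k).choose (i k)) * coeff (u + i) P := by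
  rw [hasseDeriv, coeff_sum, Finset.sum_eq_single (u + i)]
  · rw [coeff_smul, add_tsub_cancel_right, coeff_monomial, if_pos rfl, nsmul_eq_mul]
  · intro m _ hne
    rw [coeff_smul, coeff_monomial]
    split_ifs with hmu
    · obtain ⟨k, hk⟩ : ∃ k, m k < i k := by
        by_contra! hle
        exact hne (by rw [← hmu, tsub_add_cancel_of_le fun k => hle k])
      rw [Finset.prod_eq_zero (Finset.mem_univ k) (Nat.choose_eq_zero_of_lt hk), zero_smul]
    · exact smul_zero _
  · intro h
    simp [notMem_support_iff.mp h]

theorem hasseDeriv_hasseDeriv (i j : σ →₀ ℕ) (P : MvPolynomial σ F) :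
    hasseDeriv j (hasseDeriv i P) =
      (∏ k, ((i + j) k).choose (i k)) • hasseDeriv (i + j) P := by
  ext u
  rw [coeff_smul, coeff_hasseDeriv, coeff_hasseDeriv, coeff_hasseDeriv, nsmul_eq_mul,
    ← mul_assoc, ← mul_assoc, ← Nat.cast_mul, ← Nat.cast_mul, ← Finset.prod_mul_distrib,
    ← Finset.prod_mul_distrib]
  rw [show u + j + i = u + (i + j) by rw [add_assoc, add_comm j]]
  congr 2
  refine Finset.prod_congr rfl fun k _ => ?_
  simp only [Finsupp.add_apply]
  have := Nat.choose_mul (n := u k + (i k + j k)) (k := i k + j k) (s := i k) (by omega)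
  rw [show u k + (i k + j k) - i k = u k + j k by omega, Nat.add_sub_cancel_left] at this
  linarith

theorem hasseDeriv_eq_C_of_totalDegree_le {P : MvPolynomial σ F} {m : σ →₀ ℕ}
    (hm : P.totalDegree ≤ m.degree) : hasseDeriv m P = C (coeff m P) := by
  ext u
  rw [coeff_hasseDeriv, coeff_C]
  split_ifs with hu
  · simp [← hu]
  · have hlt : P.totalDegree < (u + m).degree := by
      rw [map_add]
      have : u.degree ≠ 0 := by rwa [Ne, Finsupp.degree_eq_zero_iff, eq_comm]
      omega
    rw [coeff_eq_zero_of_totalDegree_lt hlt, mul_zero]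

end HasseDeriv

section Multiplicity

variable {F : Type*} [Field F] {σ : Type*} [Fintype σ] [DecidableEq σ]
  {f : MvPolynomial σ F} {a : σ → F} {N : ℕ}

theorem hasMultAtLeast_iff :
    HasMultAtLeast f a N ↔ ∀ i : σ →₀ ℕ, i.degree < N → eval a (hasseDeriv i f) = 0 := by
  simp only [HasMultAtLeast, Finsupp.degree_eq_sum]

theorem hasMultAtLeast_zero : HasMultAtLeast f a 0 :=
  fun _ hi => absurd hi (Nat.not_lt_zero _)

theorem HasMultAtLeast.hasseDeriv (h : HasMultAtLeast f a N) (i : σ →₀ ℕ) :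
    HasMultAtLeast (hasseDeriv i f) a (N - i.degree) := by
  rw [hasMultAtLeast_iff] at h ⊢
  intro j hj
  rw [hasseDeriv_hasseDeriv, map_nsmul, h (i + j) (by rw [map_add]; omega), smul_zero]

theorem HasMultAtLeast.le_totalDegree (hf : f ≠ 0) (h : HasMultAtLeast f a N) :
    N ≤ f.totalDegree := by
  obtain ⟨m, hm, htop⟩ := Finset.exists_mem_eq_sup f.support (support_nonempty.mpr hf)
    Finsupp.degree
  by_contra! hlt
  have := hasMultAtLeast_iff.mp h m (by rw [← htop]; exact hlt)
  rw [hasseDeriv_eq_C_of_totalDegree_le htop.le, eval_C] at this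
  exact mem_support_iff.mp hm this

theorem bddAbove_hasMultAtLeast (hf : f ≠ 0) : BddAbove {N | HasMultAtLeast f a N} :=
  ⟨f.totalDegree, fun _ => HasMultAtLeast.le_totalDegree hf⟩

theorem mult_le_totalDegree (hf : f ≠ 0) : mult f a ≤ f.totalDegree :=
  csSup_le ⟨0, hasMultAtLeast_zero⟩ fun _ => HasMultAtLeast.le_totalDegree hf

theorem hasMultAtLeast_mult (hf : f ≠ 0) : HasMultAtLeast f a (mult f a) :=
  Nat.sSup_mem ⟨0, hasMultAtLeast_zero⟩ (bddAbove_hasMultAtLeast hf)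

theorem exists_eval_hasseDeriv_ne_zero (hf : f ≠ 0) :
    ∃ i : σ →₀ ℕ, i.degree ≤ mult f a ∧ eval a (hasseDeriv i f) ≠ 0 := by
  have h : ¬ HasMultAtLeast f a (mult f a + 1) := fun h =>
    (le_csSup (bddAbove_hasMultAtLeast hf) h).not_gt (Nat.lt_succ_self _)
  simpa only [hasMultAtLeast_iff, not_forall, Nat.lt_succ_iff, exists_prop] using h

theorem mult_eq_zero_of_isEmpty [IsEmpty σ] (hf : f ≠ 0) : mult f a = 0 := by
  obtain ⟨c, rfl⟩ := C_surjective σ f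
  simpa using mult_le_totalDegree hf (a := a)

end Multiplicity

namespace Polynomial

theorem hasseDeriv_map {R S : Type*} [CommSemiring R] [CommSemiring S] (φ : R →+* S) (j : ℕ)
    (p : R[X]) : hasseDeriv j (p.map φ) = (hasseDeriv j p).map φ := by
  ext s
  simp [hasseDeriv_coeff]

variable {R : Type*} [CommRing R]

theorem le_rootMultiplicity_iff_hasseDeriv {p : R[X]} (hp : p ≠ 0) (b : R) (N : ℕ) :
    N ≤ p.rootMultiplicity b ↔ ∀ j < N, (hasseDeriv j p).eval b = 0 := by
  rw [le_rootMultiplicity_iff hp, ← map_dvd_iff (taylorEquiv b), map_pow, map_sub]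
  change (taylor b X - taylor b (C b)) ^ N ∣ taylor b p ↔ _
  rw [taylor_X, taylor_C, add_sub_cancel_right, X_pow_dvd_iff]
  simp only [taylor_coeff]

theorem sum_rootMultiplicity_le_natDegree [IsDomain R] (p : R[X]) (U : Finset R) :
    ∑ b ∈ U, p.rootMultiplicity b ≤ p.natDegree := by
  classical
  calc ∑ b ∈ U, p.rootMultiplicity b
      ≤ ∑ b ∈ U ∪ p.roots.toFinset, p.roots.count b := by
        simp only [count_roots]
        exact Finset.sum_le_sum_of_subset Finset.subset_union_left
    _ = Multiset.card p.roots := Multiset.sum_count_eq_card fun _ hb =>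
        Finset.mem_union_right _ (Multiset.mem_toFinset.2 hb)
    _ ≤ p.natDegree := card_roots' p

end Polynomial

theorem Finsupp.degree_cons {n : ℕ} (s : ℕ) (m : Fin n →₀ ℕ) :
    (Finsupp.cons s m).degree = s + m.degree := by
  simp [Finsupp.degree_eq_sum, Fin.sum_univ_succ]

theorem Finsupp.cons_add_cons {n : ℕ} {M : Type*} [AddZeroClass M] (x y : M) (s t : Fin n →₀ M) :
    Finsupp.cons x s + Finsupp.cons y t = Finsupp.cons (x + y) (s + t) := by
  ext k
  cases k using Fin.cases <;> simp

theorem Finset.sum_piFinset_fin_succ {n : ℕ} {α β : Type*} [AddCommMonoid β]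
    (U : Finset α) (g : (Fin (n + 1) → α) → β) :
    ∑ a ∈ Fintype.piFinset (fun _ => U), g a =
      ∑ a ∈ Fintype.piFinset (fun _ : Fin n => U), ∑ b ∈ U, g (Fin.cons b a) := by
  have := Finset.filter_piFinset_eq_map_consEquiv (fun _ : Fin (n + 1) => U) (fun _ => True)
  simp only [Finset.filter_true] at this
  rw [this, Finset.sum_map, Finset.sum_product_right]
  rfl

section FinSuccEquiv

variable {F : Type*} [Field F] {n : ℕ}

theorem coeff_finSuccEquiv_hasseDeriv_cons_zero (i : Fin n →₀ ℕ)
    (f : MvPolynomial (Fin (n + 1)) F) (s : ℕ) :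
    (finSuccEquiv F n (hasseDeriv (Finsupp.cons 0 i) f)).coeff s =
      hasseDeriv i ((finSuccEquiv F n f).coeff s) := by
  ext m
  rw [finSuccEquiv_coeff_coeff, coeff_hasseDeriv, coeff_hasseDeriv, finSuccEquiv_coeff_coeff,
    Finsupp.cons_add_cons, add_zero, Fin.prod_univ_succ]
  simp

theorem finSuccEquiv_hasseDeriv_single_zero (j : ℕ) (f : MvPolynomial (Fin (n + 1)) F) :
    finSuccEquiv F n (hasseDeriv (Finsupp.single 0 j) f) =
      Polynomial.hasseDeriv j (finSuccEquiv F n f) := by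
  ext s m
  rw [← Finsupp.cons_zero_eq_single_zero, Polynomial.hasseDeriv_coeff, ← C_eq_coe_nat,
    coeff_C_mul, finSuccEquiv_coeff_coeff, finSuccEquiv_coeff_coeff, coeff_hasseDeriv,
    Finsupp.cons_add_cons, add_zero, Fin.prod_univ_succ]
  simp

theorem HasMultAtLeast.le_rootMultiplicity_finSuccEquiv {g : MvPolynomial (Fin (n + 1)) F}
    {b : F} {a : Fin n → F} {N : ℕ} (h : HasMultAtLeast g (Fin.cons b a) N)
    (hg : (finSuccEquiv F n g).map (eval a) ≠ 0) :
    N ≤ ((finSuccEquiv F n g).map (eval a)).rootMultiplicity b := by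
  rw [Polynomial.le_rootMultiplicity_iff_hasseDeriv hg]
  intro j hj
  rw [Polynomial.hasseDeriv_map, ← finSuccEquiv_hasseDeriv_single_zero,
    ← eval_eq_eval_mv_eval']
  exact hasMultAtLeast_iff.mp h _ (by simpa using hj)

theorem sum_mult_cons_le {f : MvPolynomial (Fin (n + 1)) F} (hf : f ≠ 0)
    (a : Fin n → F) (U : Finset F) :
    ∑ b ∈ U, mult f (Fin.cons b a) ≤
      U.card * mult (finSuccEquiv F n f).leadingCoeff a + (finSuccEquiv F n f).natDegree := by
  set q := finSuccEquiv F n f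
  have hq : q ≠ 0 := (map_ne_zero_iff _ (finSuccEquiv F n).injective).mpr hf
  obtain ⟨i, hi, hne⟩ :=
    exists_eval_hasseDeriv_ne_zero (a := a) (Polynomial.leadingCoeff_ne_zero.mpr hq)
  set P := (finSuccEquiv F n (hasseDeriv (Finsupp.cons 0 i) f)).map (eval a)
  have hPcoeff (s : ℕ) : P.coeff s = eval a (hasseDeriv i (q.coeff s)) := by
    rw [Polynomial.coeff_map, coeff_finSuccEquiv_hasseDeriv_cons_zero]
  have hPtop : P.coeff q.natDegree ≠ 0 := by rwa [hPcoeff]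
  have hP : P ≠ 0 := fun h => hPtop (by rw [h, Polynomial.coeff_zero])
  have hPdeg : P.natDegree ≤ q.natDegree := by
    refine Polynomial.natDegree_le_iff_coeff_eq_zero.mpr fun s hs => ?_
    rw [hPcoeff, q.coeff_eq_zero_of_natDegree_lt hs]
    simp [hasseDeriv]
  have hslice (b : F) : mult f (Fin.cons b a) ≤ mult q.leadingCoeff a + P.rootMultiplicity b := by
    have hroot : mult f (Fin.cons b a) - i.degree ≤ P.rootMultiplicity b := by
      simpa only [Finsupp.degree_cons, zero_add] using
        ((hasMultAtLeast_mult hf).hasseDeriv _).le_rootMultiplicity_finSuccEquiv hP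
    omega
  calc ∑ b ∈ U, mult f (Fin.cons b a)
      ≤ ∑ b ∈ U, (mult q.leadingCoeff a + P.rootMultiplicity b) :=
        Finset.sum_le_sum fun b _ => hslice b
    _ = U.card * mult q.leadingCoeff a + ∑ b ∈ U, P.rootMultiplicity b := by
        rw [Finset.sum_add_distrib, Finset.sum_const, smul_eq_mul]
    _ ≤ U.card * mult q.leadingCoeff a + q.natDegree := by
        gcongr
        exact (P.sum_rootMultiplicity_le_natDegree U).trans hPdeg

end FinSuccEquiv

-- Multiplying by `U.card` keeps the exponent `n` free of the truncated `n - 1`.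
theorem card_mul_sum_mult_le {F : Type*} [Field F] {n : ℕ}
    {f : MvPolynomial (Fin n) F} (hf : f ≠ 0) (U : Finset F) :
    U.card * ∑ a ∈ Fintype.piFinset (fun _ : Fin n => U), mult f a ≤
      f.totalDegree * U.card ^ n := by
  induction n with
  | zero => simp [mult_eq_zero_of_isEmpty hf]
  | succ n ih =>
    set q := finSuccEquiv F n f
    have hlc : q.leadingCoeff ≠ 0 := Polynomial.leadingCoeff_ne_zero.mpr
      ((map_ne_zero_iff _ (finSuccEquiv F n).injective).mpr hf)
    have hdeg : q.leadingCoeff.totalDegree + q.natDegree ≤ f.totalDegree :=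
      totalDegree_coeff_finSuccEquiv_add_le f _ hlc
    calc U.card * ∑ a ∈ Fintype.piFinset (fun _ => U), mult f a
        = U.card * ∑ a ∈ Fintype.piFinset (fun _ : Fin n => U),
            ∑ b ∈ U, mult f (Fin.cons b a) := by
          rw [Finset.sum_piFinset_fin_succ]
      _ ≤ U.card * ∑ a ∈ Fintype.piFinset (fun _ : Fin n => U),
            (U.card * mult q.leadingCoeff a + q.natDegree) := by
          gcongr with a
          exact sum_mult_cons_le hf a U
      _ = U.card * (U.card * ∑ a ∈ Fintype.piFinset (fun _ : Fin n => U), mult q.leadingCoeff a)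
            + q.natDegree * U.card ^ (n + 1) := by
          rw [Finset.sum_add_distrib, ← Finset.mul_sum, Finset.sum_const,
            Fintype.card_piFinset_const, smul_eq_mul]
          ring
      _ ≤ U.card * (q.leadingCoeff.totalDegree * U.card ^ n)
            + q.natDegree * U.card ^ (n + 1) := by
          gcongr U.card * ?_ + _
          exact ih hlc
      _ = (q.leadingCoeff.totalDegree + q.natDegree) * U.card ^ (n + 1) := by ring
      _ ≤ f.totalDegree * U.card ^ (n + 1) := by gcongr

theorem schwartz_zippel_mult_general {F : Type*} [Field F] {n : ℕ}
    (f : MvPolynomial (Fin n) F) (hf : f ≠ 0) (d : ℕ) (hd : f.totalDegree ≤ d)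
    (U : Finset F) :
    ∑ a ∈ Fintype.piFinset (fun _ : Fin n => U), mult f a ≤ d * U.card ^ (n - 1) := by
  obtain _ | n := n
  · simp [mult_eq_zero_of_isEmpty hf]
  obtain rfl | hU := U.eq_empty_or_nonempty
  · simp
  refine Nat.le_of_mul_le_mul_left ?_ hU.card_pos
  calc U.card * ∑ a ∈ Fintype.piFinset (fun _ => U), mult f a
      ≤ f.totalDegree * U.card ^ (n + 1) := card_mul_sum_mult_le hf U
    _ ≤ d * U.card ^ (n + 1) := by gcongr
    _ = U.card * (d * U.card ^ (n + 1 - 1)) := by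
        rw [Nat.add_sub_cancel]
        ring

/-- Schwartz–Zippel with multiplicity: for a nonzero `f ∈ F[x_1,…,x_n]` of degree at most
`d` and any finite `U ⊆ F`, `Σ_{a ∈ U^n} mult(f,a) ≤ d·|U|^{n-1}`. -/
theorem schwartz_zippel_mult {F : Type*} [Field F] [DecidableEq F] {n : ℕ}
    (f : MvPolynomial (Fin n) F) (hf : f ≠ 0) (d : ℕ) (hd : f.totalDegree ≤ d)
    (U : Finset F) :
    ∑ a ∈ Fintype.piFinset (fun _ : Fin n => U), mult f a ≤ d * U.card ^ (n - 1) :=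
  schwartz_zippel_mult_general f hf d hd U
end

section
/- Let F be a set of k-flats in F_q^n, exactly one parallel to each k-dimensional subspace (2 ≤ k < n), and let 1 ≤ ℓ < k. For each ℓ-dimensional subspace Λ, the set of ℓ-flats parallel to Λ that are contained in some flat of F is in bijection with a (k−ℓ, q^{k−ℓ})-Furstenberg set in a complementary subspace P_Λ ≅ F_q^{n−ℓ}; consequently the total number of ℓ-flats contained in flats of F is at least C(n,ℓ)_q · K(q, n−ℓ, k−ℓ, q^{k−ℓ}). -/
/-- The q-binomial coefficient `C(n,k)_q = ∏_{i=0}^{k-1} (q^{n-i} - 1)/(q^{k-i} - 1)`. -/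
noncomputable def qBinom (q n k : ℕ) : ℚ :=
  ∏ i ∈ Finset.range k, ((q : ℚ) ^ (n - i) - 1) / ((q : ℚ) ^ (k - i) - 1)

/-!
Fix an `ℓ`-dimensional subspace `Λ` and a linear surjection `π : F_q^n → F_q^(n-ℓ)` with kernel
`Λ`. The `ℓ`-flats parallel to `Λ` are exactly the fibres of `π`; let `T_Λ` be the set of points
whose fibre lies in a flat of the family. Given a `(k-ℓ)`-dimensional subspace `W'`, the flat of
the family parallel to the `k`-dimensional subspace `π⁻¹(W')` contains the fibres over a whole
translate of `W'`, so `T_Λ` is a `(k-ℓ, q^(k-ℓ))`-Furstenberg set and has at least `c` points.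
Fibres of projections with different kernels are different flats, so summing over the
`C(n,ℓ)_q` subspaces `Λ` gives the bound.
-/

open Module Submodule Function

section Flats

variable {F V E : Type*} [Ring F] [AddCommGroup V] [Module F V] [AddCommGroup E] [Module F E]

theorem Submodule.image_add_left_eq_mk' (w : V) (Λ : Submodule F V) :
    (w + ·) '' (Λ : Set V) = AffineSubspace.mk' w Λ := by
  ext y
  simp [Set.image_add_left, AffineSubspace.mem_mk', neg_add_eq_sub]

theorem Submodule.eq_of_image_add_left_eq {Λ Λ' : Submodule F V} {w w' : V}
    (h : (w + ·) '' (Λ : Set V) = (w' + ·) '' (Λ' : Set V)) : Λ = Λ' := by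
  rw [image_add_left_eq_mk', image_add_left_eq_mk'] at h
  simpa using congrArg AffineSubspace.direction (SetLike.coe_injective h)

theorem LinearMap.preimage_singleton_eq_image_add_left (f : V →ₗ[F] E) (w : V) :
    f ⁻¹' {f w} = (w + ·) '' (LinearMap.ker f : Set V) := by
  ext y
  simp [Set.image_add_left, neg_add_eq_sub, sub_eq_zero]

theorem injective_sigma_preimage_singleton {ι : Type*} (π : ι → V →ₗ[F] E)
    (hπ : ∀ i, Surjective (π i)) (hker : Injective fun i => LinearMap.ker (π i)) :
    Injective fun p : Σ _ : ι, E => π p.1 ⁻¹' {p.2} := by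
  rintro ⟨i, x⟩ ⟨j, y⟩ h
  obtain ⟨w, rfl⟩ := hπ i x
  obtain ⟨w', rfl⟩ := hπ j y
  obtain rfl : i = j := hker <| eq_of_image_add_left_eq <| by
    simpa only [LinearMap.preimage_singleton_eq_image_add_left] using h
  exact congrArg _ (Set.singleton_injective (Set.preimage_injective.mpr (hπ i) h))

end Flats

section Rank

variable {F V E : Type*} [DivisionRing F] [AddCommGroup V] [Module F V] [FiniteDimensional F V]
  [AddCommGroup E] [Module F E]

theorem Submodule.finrank_comap_of_surjective {f : V →ₗ[F] E} (hf : Surjective f)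
    (p : Submodule F E) : finrank F (p.comap f) = finrank F p + finrank F (LinearMap.ker f) := by
  have hker : LinearMap.ker f ≤ p.comap f := fun x hx => by simp [LinearMap.mem_ker.mp hx]
  have := LinearMap.finrank_range_add_finrank_ker (f.domRestrict (p.comap f))
  rw [LinearMap.range_domRestrict, map_comap_eq_of_surjective hf, LinearMap.ker_domRestrict,
    (comapSubtypeEquivOfLe hker).finrank_eq] at this
  exact this.symm

theorem Submodule.exists_surjective_ker_eq (Λ : Submodule F V) {m : ℕ}
    (h : finrank F Λ + m = finrank F V) :
    ∃ π : V →ₗ[F] (Fin m → F), Surjective π ∧ LinearMap.ker π = Λ := by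
  have hquot : finrank F (V ⧸ Λ) = finrank F (Fin m → F) := by
    have := Λ.finrank_quotient_add_finrank
    rw [finrank_fin_fun]
    omega
  obtain ⟨ψ⟩ := FiniteDimensional.nonempty_linearEquiv_of_finrank_eq hquot
  refine ⟨ψ.toLinearMap ∘ₗ Λ.mkQ, ψ.surjective.comp Λ.mkQ_surjective, ?_⟩
  rw [LinearMap.ker_comp, LinearEquiv.ker]
  exact ker_mkQ Λ

end Rank

section Furstenberg

variable (F : Type*) {V E : Type*} [Field F] [AddCommGroup V] [Module F V]
  [AddCommGroup E] [Module F E]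

open Classical in
def IsFurstenbergSet (T : Finset E) (d m : ℕ) : Prop :=
  ∀ W : Submodule F E, finrank F W = d → ∃ u : E, m ≤ (T.filter (fun x => x - u ∈ W)).card

variable {F}

open Classical in
noncomputable def coveredFibers [Fintype E] {k : ℕ} (π : V →ₗ[F] E)
    (v : ∀ W : Submodule F V, finrank F W = k → V) : Finset E :=
  {x | ∃ (W : Submodule F V) (hW : finrank F W = k), π ⁻¹' {x} ⊆ (v W hW + ·) '' (W : Set V)}

theorem Submodule.card_filter_sub_mem [Fintype E] (u : E) (W : Submodule F E)
    [DecidablePred fun x => x - u ∈ W] :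
    (Finset.univ.filter fun x => x - u ∈ W).card = Nat.card W := by
  rw [← Fintype.card_subtype, ← Nat.card_eq_fintype_card]
  exact Nat.card_congr ((Equiv.subRight u).subtypeEquiv fun _ => Iff.rfl)

theorem isFurstenbergSet_coveredFibers [Fintype F] [FiniteDimensional F V] [Fintype E]
    {π : V →ₗ[F] E} (hπ : Surjective π) {d k : ℕ} (v : ∀ W : Submodule F V, finrank F W = k → V)
    (hk : d + finrank F (LinearMap.ker π) = k) :
    IsFurstenbergSet F (coveredFibers π v) d (Fintype.card F ^ d) := by
  classical
  intro W' hW'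
  have hW : finrank F (W'.comap π) = k := by rw [finrank_comap_of_surjective hπ, hW', hk]
  set w₀ := v (W'.comap π) hW
  refine ⟨π w₀, ?_⟩
  have hcover : ∀ x, x - π w₀ ∈ W' → x ∈ coveredFibers π v := by
    intro x hx
    simp only [coveredFibers, Finset.mem_filter, Finset.mem_univ, true_and]
    refine ⟨_, hW, fun y hy => ⟨y - w₀, ?_, add_sub_cancel _ _⟩⟩
    rw [SetLike.mem_coe, mem_comap, map_sub, show π y = x from hy]
    exact hx
  calc Fintype.card F ^ d = Nat.card W' := by
        rw [Nat.card_eq_fintype_card, card_eq_pow_finrank (K := F) (V := W'), hW']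
    _ = (Finset.univ.filter fun x => x - π w₀ ∈ W').card := (W'.card_filter_sub_mem _).symm
    _ ≤ _ := Finset.card_le_card fun x hx => by
        simp only [Finset.mem_filter, Finset.mem_univ, true_and] at hx ⊢
        exact ⟨hcover x hx, hx⟩

theorem natCard_mul_le_natCard_flats_in_family [Finite V] [Fintype E] {k ℓ c : ℕ}
    (v : ∀ W : Submodule F V, finrank F W = k → V)
    (π : {Λ : Submodule F V // finrank F Λ = ℓ} → V →ₗ[F] E) (hπ : ∀ Λ, Surjective (π Λ))
    (hker : ∀ Λ, LinearMap.ker (π Λ) = Λ) (hc : ∀ Λ, c ≤ (coveredFibers (π Λ) v).card) :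
    Nat.card {Λ : Submodule F V // finrank F Λ = ℓ} * c ≤
      Nat.card {s : Set V //
        (∃ (Λ : Submodule F V) (w : V), finrank F Λ = ℓ ∧ s = (w + ·) '' (Λ : Set V)) ∧
        ∃ (W : Submodule F V) (hW : finrank F W = k), s ⊆ (v W hW + ·) '' (W : Set V)} := by
  classical
  have : Fintype {Λ : Submodule F V // finrank F Λ = ℓ} := Fintype.ofFinite _
  have hker_inj : Injective fun Λ => LinearMap.ker (π Λ) := fun Λ Λ' h =>
    Subtype.ext ((hker Λ).symm.trans (h.trans (hker Λ')))
  have hfibers_inj := (injective_sigma_preimage_singleton π hπ hker_inj).comp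
    (injective_id.sigma_map fun Λ => Subtype.val_injective (p := (· ∈ coveredFibers (π Λ) v)))
  calc Nat.card {Λ : Submodule F V // finrank F Λ = ℓ} * c = ∑ _Λ, c := by simp
    _ ≤ ∑ Λ, (coveredFibers (π Λ) v).card := Finset.sum_le_sum fun Λ _ => hc Λ
    _ = Nat.card (Σ Λ, coveredFibers (π Λ) v) := by simp
    _ ≤ _ := by
      refine Nat.card_le_card_of_injective (fun p => ⟨π p.1 ⁻¹' {p.2.1}, ?_, ?_⟩)
        fun p p' h => hfibers_inj (congrArg Subtype.val h)
      · obtain ⟨w, hw⟩ := hπ p.1 p.2.1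
        exact ⟨p.1, w, p.1.2, by rw [← hw, LinearMap.preimage_singleton_eq_image_add_left, hker]⟩
      · simpa [coveredFibers] using p.2.2

end Furstenberg

theorem qBinom_mul_prod {q n ℓ : ℕ} (hq : 1 < q) (hℓ : ℓ ≤ n) :
    qBinom q n ℓ * ∏ i : Fin ℓ, ((q ^ ℓ - q ^ i.val : ℕ) : ℚ) =
      ∏ i : Fin ℓ, ((q ^ n - q ^ i.val : ℕ) : ℚ) := by
  rw [qBinom, Fin.prod_univ_eq_prod_range (fun i => ((q ^ ℓ - q ^ i : ℕ) : ℚ)),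
    Fin.prod_univ_eq_prod_range (fun i => ((q ^ n - q ^ i : ℕ) : ℚ)), ← Finset.prod_mul_distrib]
  refine Finset.prod_congr rfl fun i hi => ?_
  have hi : i < ℓ := Finset.mem_range.mp hi
  have hden : (q : ℚ) ^ (ℓ - i) - 1 ≠ 0 :=
    sub_ne_zero.mpr (one_lt_pow₀ (by exact_mod_cast hq) (by omega)).ne'
  rw [Nat.cast_sub (Nat.pow_le_pow_right hq.le hi.le),
    Nat.cast_sub (Nat.pow_le_pow_right hq.le (by omega))]
  push_cast
  rw [← pow_sub_mul_pow (q : ℚ) hi.le, ← pow_sub_mul_pow (q : ℚ) (show i ≤ n by omega)]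
  field_simp

section SubspaceCount

variable {F V : Type*} [Field F] [AddCommGroup V] [Module F V]

def linearIndependentSpanEquiv [FiniteDimensional F V] {ℓ : ℕ} (Λ : Submodule F V)
    (hΛ : finrank F Λ = ℓ) :
    {s : {s : Fin ℓ → V // LinearIndependent F s} // span F (Set.range s.1) = Λ} ≃
      {t : Fin ℓ → Λ // LinearIndependent F t} where
  toFun s := ⟨fun i => ⟨s.1.1 i, s.2.le (subset_span (Set.mem_range_self i))⟩,
    .of_comp Λ.subtype s.1.2⟩
  invFun t := ⟨⟨Λ.subtype ∘ t.1, t.2.map' Λ.subtype (ker_subtype Λ)⟩, by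
    rw [Set.range_comp, span_image, t.2.span_eq_top_of_card_eq_finrank' (by simp [hΛ]),
      Submodule.map_top, range_subtype]⟩
  left_inv _ := rfl
  right_inv _ := rfl

variable [Fintype F] [Finite V]

theorem natCard_subspaces_mul_prod {ℓ : ℕ} (hℓ : ℓ ≤ finrank F V) :
    Nat.card {Λ : Submodule F V // finrank F Λ = ℓ} *
        ∏ i : Fin ℓ, (Fintype.card F ^ ℓ - Fintype.card F ^ i.val) =
      ∏ i : Fin ℓ, (Fintype.card F ^ finrank F V - Fintype.card F ^ i.val) := by
  have : FiniteDimensional F V := .of_finite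
  have : Fintype {Λ : Submodule F V // finrank F Λ = ℓ} := Fintype.ofFinite _
  let spanOf (s : {s : Fin ℓ → V // LinearIndependent F s}) :
      {Λ : Submodule F V // finrank F Λ = ℓ} :=
    ⟨span F (Set.range s.1), by rw [finrank_span_eq_card s.2, Fintype.card_fin]⟩
  have hfiber (Λ : {Λ : Submodule F V // finrank F Λ = ℓ}) :
      Nat.card {s // spanOf s = Λ} =
        ∏ i : Fin ℓ, (Fintype.card F ^ ℓ - Fintype.card F ^ i.val) := by
    rw [Nat.card_congr ((Equiv.subtypeEquivRight fun _ => Subtype.ext_iff).trans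
      (linearIndependentSpanEquiv Λ.1 Λ.2)), card_linearIndependent Λ.2.ge, Λ.2]
  rw [← card_linearIndependent hℓ, ← Nat.card_congr (Equiv.sigmaFiberEquiv spanOf),
    Nat.card_sigma, Finset.sum_congr rfl fun Λ _ => hfiber Λ, Finset.sum_const, Finset.card_univ,
    smul_eq_mul, Nat.card_eq_fintype_card]

theorem natCard_subspaces_eq_qBinom {ℓ : ℕ} (hℓ : ℓ ≤ finrank F V) :
    (Nat.card {Λ : Submodule F V // finrank F Λ = ℓ} : ℚ) =
      qBinom (Fintype.card F) (finrank F V) ℓ := by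
  have hq : 1 < Fintype.card F := Fintype.one_lt_card
  have hprod : ∏ i : Fin ℓ, ((Fintype.card F ^ ℓ - Fintype.card F ^ i.val : ℕ) : ℚ) ≠ 0 :=
    Finset.prod_ne_zero_iff.mpr fun i _ =>
      Nat.cast_ne_zero.mpr (Nat.sub_ne_zero_of_lt (Nat.pow_lt_pow_right hq i.2))
  refine mul_right_cancel₀ hprod ?_
  rw [qBinom_mul_prod hq hℓ]
  exact_mod_cast natCard_subspaces_mul_prod hℓ

end SubspaceCount

open Classical in
theorem flats_in_furstenberg_family_general {F : Type*} [Field F] [Fintype F] (q n k ℓ c : ℕ)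
    (hq : Fintype.card F = q) (hkn : k < n) (hlk : ℓ < k)
    (v : ∀ W : Submodule F (Fin n → F), Module.finrank F W = k → (Fin n → F))
    (hc : ∀ T : Finset (Fin (n - ℓ) → F),
      (∀ W : Submodule F (Fin (n - ℓ) → F), Module.finrank F W = k - ℓ →
        ∃ u : Fin (n - ℓ) → F, q ^ (k - ℓ) ≤ (T.filter (fun x => x - u ∈ W)).card) →
      c ≤ T.card) :
    qBinom q n ℓ * c ≤
      (Nat.card {s : Set (Fin n → F) //
        (∃ (Λ : Submodule F (Fin n → F)) (w : Fin n → F),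
          Module.finrank F Λ = ℓ ∧ s = (fun x => w + x) '' (Λ : Set (Fin n → F))) ∧
        ∃ (W : Submodule F (Fin n → F)) (hW : Module.finrank F W = k),
          s ⊆ (fun x => v W hW + x) '' (W : Set (Fin n → F))} : ℚ) := by
  have hV : finrank F (Fin n → F) = n := finrank_fin_fun F
  have hproj (Λ : {Λ : Submodule F (Fin n → F) // finrank F Λ = ℓ}) :
      ∃ π : (Fin n → F) →ₗ[F] (Fin (n - ℓ) → F), Surjective π ∧ LinearMap.ker π = Λ :=
    Λ.1.exists_surjective_ker_eq (by rw [Λ.2, hV]; omega)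
  choose π hπ hker using hproj
  have hcount := natCard_mul_le_natCard_flats_in_family v π hπ hker fun Λ =>
    hc _ (hq ▸ isFurstenbergSet_coveredFibers (hπ Λ) v (by rw [hker, Λ.2]; omega))
  have hsub := natCard_subspaces_eq_qBinom (F := F) (V := Fin n → F) (ℓ := ℓ) (by omega)
  rw [hV, hq] at hsub
  rw [← hsub]
  exact_mod_cast hcount

open Classical in
/-- If `F` is a family of `k`-flats in `F_q^n`, one (given by the translation `v W hW`)
parallel to each `k`-dimensional subspace, `2 ≤ k < n`, `1 ≤ ℓ < k`, and every
`(k−ℓ, q^{k−ℓ})`-Furstenberg set in `F_q^{n−ℓ}` has at least `c` points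
(i.e. `c ≤ K(q, n−ℓ, k−ℓ, q^{k−ℓ})`), then the number of `ℓ`-flats contained in some
flat of `F` is at least `C(n,ℓ)_q · c`. -/
theorem flats_in_furstenberg_family {F : Type*} [Field F] [Fintype F] (q n k ℓ c : ℕ)
    (hq : Fintype.card F = q) (hk : 2 ≤ k) (hkn : k < n) (hl : 1 ≤ ℓ) (hlk : ℓ < k)
    (v : ∀ W : Submodule F (Fin n → F), Module.finrank F W = k → (Fin n → F))
    (hc : ∀ T : Finset (Fin (n - ℓ) → F),
      (∀ W : Submodule F (Fin (n - ℓ) → F), Module.finrank F W = k - ℓ →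
        ∃ u : Fin (n - ℓ) → F, q ^ (k - ℓ) ≤ (T.filter (fun x => x - u ∈ W)).card) →
      c ≤ T.card) :
    qBinom q n ℓ * c ≤
      (Nat.card {s : Set (Fin n → F) //
        (∃ (Λ : Submodule F (Fin n → F)) (w : Fin n → F),
          Module.finrank F Λ = ℓ ∧ s = (fun x => w + x) '' (Λ : Set (Fin n → F))) ∧
        ∃ (W : Submodule F (Fin n → F)) (hW : Module.finrank F W = k),
          s ⊆ (fun x => v W hW + x) '' (W : Set (Fin n → F))} : ℚ) :=
  flats_in_furstenberg_family_general q n k ℓ c hq hkn hlk v hc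
end
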